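/- Let u be a node and let an execution contain two transitions C_0 ↦ C_1 and C_2 ↦ C_3 with C_1 ↦* C_2, in each of which u executes a rule. Then: (1) if u executes an Increase rule in both transitions and m_u = 1 in C_3, then u executes a Reset rule in some transition occurring between C_1 and C_2; (2) if u executes a Seduction(a) or Marriage(a) rule (for some neighbors a) in both transitions, then u executes a Reset rule in some transition occurring between C_1 and C_2. -/
import Mathlib


/-!
Formal model of the self-stabilizing maximal-matching algorithm in the
link-register model under read/write atomicity.

Nodes form a finite simple graph `G` on a vertex type `V` whose linear order
plays the role of the distinct identifiers.  A configuration records, for each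
node `u`, its pointer `p u : Option V` (`none` = null), its lock variable
`m u : Fin 3`, and for each (directed) link a register `r u v : RegFlag × Fin 3`.
-/

inductive RegFlag where
  | Idle | You | Other
deriving DecidableEq

abbrev RegVal : Type := RegFlag × Fin 3

inductive Rule (V : Type) where
  | write (a : V)
  | seduction (a : V)
  | marriage (a : V)
  | increase
  | reset
deriving DecidableEq

structure Config (V : Type) where
  p : V → Option V
  m : V → Fin 3
  r : V → V → RegVal

variable {V : Type}

def correctRegisterValue [DecidableEq V] (C : Config V) (u a : V) : RegVal :=
  match C.p u with
  | none => (RegFlag.Idle, 0)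
  | some b => if b = a then (RegFlag.You, C.m u) else (RegFlag.Other, C.m u)

def PRabandonment [LinearOrder V] (C : Config V) (u : V) : Prop :=
  ∃ v, C.p u = some v ∧
    (((C.r v u).1 ≠ RegFlag.You ∧ (v < u ∨ C.m u ≠ 0)) ∨
     (C.r v u = (RegFlag.Other, 2) ∧ u < v))

def PRreset [LinearOrder V] (C : Config V) (u : V) : Prop :=
  ∃ v, C.p u = some v ∧ (C.r v u).1 = RegFlag.You ∧
    ((C.m u = 0 ∧ (C.r v u).2 = 2) ∨
     (C.m u = 2 ∧ (C.r v u).2 = 0) ∨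
     (C.m u = 0 ∧ (C.r v u).2 = 1 ∧ v < u) ∨
     (C.m u = 1 ∧ (C.r v u).2 = 0 ∧ u < v) ∨
     (C.m u = 1 ∧ (C.r v u).2 = 2 ∧ u < v) ∨
     (C.m u = 2 ∧ (C.r v u).2 = 1 ∧ v < u))

/-- The guard of each rule of node `u` in configuration `C`. -/
def eligible [LinearOrder V] (G : SimpleGraph V) (C : Config V) (u : V) : Rule V → Prop
  | .write a => G.Adj u a ∧ C.r u a ≠ correctRegisterValue C u a
  | .seduction a => G.Adj u a ∧ C.p u = none ∧ C.r u a = correctRegisterValue C u a ∧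
      C.r a u = (RegFlag.Idle, 0) ∧ u < a
  | .marriage a => G.Adj u a ∧ C.p u = none ∧ C.r u a = correctRegisterValue C u a ∧
      C.r a u = (RegFlag.You, 0) ∧ a < u
  | .increase => ∃ v, C.p u = some v ∧ C.r u v = correctRegisterValue C u v ∧
      (C.r v u).1 = RegFlag.You ∧
      ((C.m u = 0 ∧ ((u < v ∧ (C.r v u).2 = 1) ∨ (v < u ∧ (C.r v u).2 = 0))) ∨
       (C.m u = 1 ∧ ((u < v ∧ (C.r v u).2 = 1) ∨ (v < u ∧ (C.r v u).2 = 2))))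
  | .reset => ∃ v, C.p u = some v ∧ C.r u v = correctRegisterValue C u v ∧
      (PRabandonment C u ∨ PRreset C u)

/-- Simultaneous application of (at most) one rule per node.  `A u = some R`
means node `u` executes rule `R`; each action only modifies the data owned by
the acting node. -/
def step [DecidableEq V] (C : Config V) (A : V → Option (Rule V)) : Config V where
  p u :=
    match A u with
    | some (Rule.seduction a) => some a
    | some (Rule.marriage a) => some a
    | some Rule.reset => none
    | _ => C.p u
  m u :=
    match A u with
    | some (Rule.seduction _) => 0
    | some (Rule.marriage _) => 0
    | some Rule.reset => 0
    | some Rule.increase => C.m u + 1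
    | _ => C.m u
  r u a :=
    match A u with
    | some (Rule.write b) => if a = b then correctRegisterValue C u a else C.r u a
    | _ => C.r u a

/-- An execution `C_0, A_0, C_1, A_1, …, C_T`: at each transition `i < T`, a
nonempty set of eligible rules (at most one per node) is executed
simultaneously. -/
structure Execution [LinearOrder V] (G : SimpleGraph V) where
  T : ℕ
  conf : ℕ → Config V
  act : ℕ → V → Option (Rule V)
  act_nonempty : ∀ i < T, ∃ u, (act i u).isSome
  act_eligible : ∀ i < T, ∀ u R, act i u = some R → eligible G (conf i) u R
  conf_succ : ∀ i < T, conf (i + 1) = step (conf i) (act i)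

/-- A configuration is stable if no rule is eligible at any node. -/
def stableConfig [LinearOrder V] (G : SimpleGraph V) (C : Config V) : Prop :=
  ∀ u R, ¬ eligible G C u R

/-- The edge `(s,t)` (with `s < t` intended) is in state `(You, α, β)`. -/
def edgeState (C : Config V) (s t : V) (α β : Fin 3) : Prop :=
  C.p s = some t ∧ C.p t = some s ∧ C.m s = α ∧ C.m t = β

def updatedCorrectState (C : Config V) (s t : V) (α β : Fin 3) : Prop :=
  edgeState C s t α β ∧ C.r s t = (RegFlag.You, α) ∧ C.r t s = (RegFlag.You, β) ∧
    ((α, β) = ((0 : Fin 3), (0 : Fin 3)) ∨ (α, β) = (0, 1) ∨ (α, β) = (1, 1) ∨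
     (α, β) = (2, 1) ∨ (α, β) = (2, 2))

def toUpdateCorrectState (C : Config V) (s t : V) (α β : Fin 3) : Prop :=
  edgeState C s t α β ∧
    ((((α, β) = ((0 : Fin 3), (1 : Fin 3)) ∨ (α, β) = (2, 2)) ∧
        C.r s t = (RegFlag.You, α) ∧ C.r t s = (RegFlag.You, β - 1)) ∨
     (((α, β) = ((1 : Fin 3), (1 : Fin 3)) ∨ (α, β) = (2, 1)) ∧
        C.r s t = (RegFlag.You, α - 1) ∧ C.r t s = (RegFlag.You, β)))

def correctState (C : Config V) (s t : V) (α β : Fin 3) : Prop :=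
  updatedCorrectState C s t α β ∨ toUpdateCorrectState C s t α β

/-- Node `u` executes a `v`-rule in transition `k`: one of `Write(v)`,
`Seduction(v)`, `Marriage(v)`, a `v`-`Increase` or a `v`-`Reset`. -/
def execVRule [LinearOrder V] {G : SimpleGraph V} (E : Execution G) (k : ℕ) (u v : V) : Prop :=
  k < E.T ∧
    (E.act k u = some (Rule.write v) ∨ E.act k u = some (Rule.seduction v) ∨
     E.act k u = some (Rule.marriage v) ∨
     ((E.act k u = some Rule.increase ∨ E.act k u = some Rule.reset) ∧
       (E.conf k).p u = some v))

private lemma stmt11_aux {V : Type} [LinearOrder V] {G : SimpleGraph V} (E : Execution G)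
    (u : V) (i j : ℕ) (hjT : j < E.T)
    (hno : ∀ k, i + 1 ≤ k → k + 1 ≤ j → E.act k u ≠ some Rule.reset)
    (hp : (E.conf (i + 1)).p u ≠ none) :
    ∀ t, i + 1 ≤ t → t ≤ j →
      (E.conf t).p u ≠ none ∧ ((E.conf (i + 1)).m u ≠ 0 → (E.conf t).m u ≠ 0) := by
  intro t
  induction t with
  | zero => omega
  | succ t ih =>
    intro ht1 ht2
    rcases Nat.lt_or_ge i t with h | h
    · obtain ⟨hpt, hmt⟩ := ih (by omega) (by omega)
      have htT : t < E.T := by omega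
      have hc := E.conf_succ t htT
      cases hA : E.act t u with
      | none => rw [hc]; simpa [step, hA] using ⟨hpt, hmt⟩
      | some R =>
        have helig := E.act_eligible t htT u R hA
        cases R with
        | write a => rw [hc]; simpa [step, hA] using ⟨hpt, hmt⟩
        | seduction a => exact (hpt helig.2.1).elim
        | marriage a => exact (hpt helig.2.1).elim
        | increase =>
          rw [hc]
          refine ⟨by simpa [step, hA] using hpt, fun _ => ?_⟩
          simp only [step, hA]
          obtain ⟨v, hv, -, -, hguard⟩ := helig
          have key : ∀ x : Fin 3, (x = 0 ∨ x = 1) → x + 1 ≠ 0 := by decide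
          rcases hguard with ⟨h0, -⟩ | ⟨h1, -⟩
          · exact key _ (Or.inl h0)
          · exact key _ (Or.inr h1)
        | reset => exact absurd hA (hno t (by omega) (by omega))
    · have ht : t + 1 = i + 1 := by omega
      rw [ht]; exact ⟨hp, fun h => h⟩

/-- Let `u` execute a rule in transitions `i` and `j`
(`i + 1 ≤ j`).  (1) If both are `Increase` moves and `m_u = 1` in `C_3 =
conf (j+1)`, then `u` executes a `Reset` in between.  (2) If both are
`Seduction(-)` or `Marriage(-)` moves, then `u` executes a `Reset` in
between. -/
theorem stmt_11 {V : Type} [Fintype V] [LinearOrder V] (G : SimpleGraph V)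
    (u : V) (E : Execution G) (i j : ℕ) (hij : i + 1 ≤ j) (hjT : j < E.T) :
    ((E.act i u = some Rule.increase ∧ E.act j u = some Rule.increase ∧
        (E.conf (j + 1)).m u = 1) →
      ∃ k, i + 1 ≤ k ∧ k + 1 ≤ j ∧ E.act k u = some Rule.reset) ∧
    (((∃ a, E.act i u = some (Rule.seduction a) ∨ E.act i u = some (Rule.marriage a)) ∧
      (∃ a, E.act j u = some (Rule.seduction a) ∨ E.act j u = some (Rule.marriage a))) →
      ∃ k, i + 1 ≤ k ∧ k + 1 ≤ j ∧ E.act k u = some Rule.reset) := by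
  have hiT : i < E.T := by omega
  constructor
  · rintro ⟨hi, hj, hm1⟩
    by_contra hno
    push_neg at hno
    obtain ⟨v, hv, -, -, hguard⟩ := E.act_eligible i hiT u _ hi
    have hci := E.conf_succ i hiT
    have hp1 : (E.conf (i + 1)).p u ≠ none := by
      rw [hci]; simp [step, hi, hv]
    have hm1' : (E.conf (i + 1)).m u ≠ 0 := by
      rw [hci]
      simp only [step, hi]
      have key : ∀ x : Fin 3, (x = 0 ∨ x = 1) → x + 1 ≠ 0 := by decide
      rcases hguard with ⟨h0, -⟩ | ⟨h1, -⟩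
      · exact key _ (Or.inl h0)
      · exact key _ (Or.inr h1)
    obtain ⟨-, hmj⟩ := stmt11_aux E u i j hjT hno hp1 j (by omega) le_rfl
    have hmj0 : (E.conf j).m u ≠ 0 := hmj hm1'
    have hcj := E.conf_succ j hjT
    rw [hcj] at hm1
    simp only [step, hj] at hm1
    have key : ∀ x : Fin 3, x + 1 = 1 → x = 0 := by decide
    exact hmj0 (key _ hm1)
  · rintro ⟨⟨a, hia⟩, ⟨b, hjb⟩⟩
    by_contra hno
    push_neg at hno
    have hci := E.conf_succ i hiT
    have hp1 : (E.conf (i + 1)).p u ≠ none := by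
      rw [hci]
      rcases hia with h | h <;> simp [step, h]
    obtain ⟨hpj, -⟩ := stmt11_aux E u i j hjT hno hp1 j (by omega) le_rfl
    rcases hjb with h | h
    · exact hpj (E.act_eligible j hjT u _ h).2.1
    · exact hpj (E.act_eligible j hjT u _ h).2.1
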